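/- Let ξ : Ω → ℝ be a smooth function on an open set Ω ⊆ ℂ satisfying the sinh-Gordon equation Δ₀ξ = -2K·sinh(2ξ)·|φ|, where K : Ω → ℝ satisfies K ≤ 0 and |φ| ≥ 0. Then the function u := log(cosh²(ξ)) is subharmonic on Ω; more precisely, Δ₀u = 2‖∇₀ξ‖²/cosh²(ξ) - 8K·sinh²(ξ)·|φ| ≥ 0. -/

import Mathlib

open Real

/-- Euclidean Laplacian of a function on `ℂ ≅ ℝ²`. -/
noncomputable def lap (f : ℂ → ℝ) (z : ℂ) : ℝ :=
  iteratedDeriv 2 (fun x : ℝ => f ⟨x, z.im⟩) z.re +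
  iteratedDeriv 2 (fun y : ℝ => f ⟨z.re, y⟩) z.im

/-- Squared norm of the Euclidean gradient of a function on `ℂ ≅ ℝ²`. -/
noncomputable def gradSq (f : ℂ → ℝ) (z : ℂ) : ℝ :=
  (deriv (fun x : ℝ => f ⟨x, z.im⟩) z.re) ^ 2 +
  (deriv (fun y : ℝ => f ⟨z.re, y⟩) z.im) ^ 2

lemma slice_calc (F : ℝ → ℝ) (s : Set ℝ) (hs : IsOpen s) (hF : ContDiffOn ℝ (⊤ : ℕ∞) F s)
    (x : ℝ) (hx : x ∈ s) :
    iteratedDeriv 2 (fun t => Real.log (Real.cosh (F t) ^ 2)) x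
      = 2 * (deriv F x) ^ 2 / Real.cosh (F x) ^ 2
        + 2 * Real.sinh (F x) / Real.cosh (F x) * iteratedDeriv 2 F x := by
  have hdF : ∀ y ∈ s, HasDerivAt F (deriv F y) y := fun y hy =>
    (((hF.differentiableOn (by simp)).differentiableAt (hs.mem_nhds hy))).hasDerivAt
  have hdF' : ContDiffOn ℝ (⊤ : ℕ∞) (deriv F) s := hF.deriv_of_isOpen hs (by simp)
  have hdF'x : HasDerivAt (deriv F) (deriv (deriv F) x) x :=
    ((hdF'.differentiableOn (by simp)).differentiableAt (hs.mem_nhds hx)).hasDerivAt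
  have hcosh : ∀ t : ℝ, Real.cosh t ≠ 0 := fun t => (Real.cosh_pos t).ne'
  have hstep : ∀ y ∈ s, HasDerivAt (fun t => Real.log (Real.cosh (F t) ^ 2))
      (2 * Real.sinh (F y) / Real.cosh (F y) * deriv F y) y := by
    intro y hy
    have h3 := (show HasDerivAt (fun t => Real.cosh (F t) ^ 2) _ y from ((hdF y hy).cosh).pow 2).log (by positivity)
    convert h3 using 1
    field_simp
    ring
  have heqon : Set.EqOn (deriv (fun t => Real.log (Real.cosh (F t) ^ 2)))
      (fun y => 2 * Real.sinh (F y) / Real.cosh (F y) * deriv F y) s :=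
    fun y hy => (hstep y hy).deriv
  rw [iteratedDeriv_succ, iteratedDeriv_one, iteratedDeriv_succ, iteratedDeriv_one]
  have hev : deriv (fun t => Real.log (Real.cosh (F t) ^ 2))
      =ᶠ[nhds x] fun y => 2 * Real.sinh (F y) / Real.cosh (F y) * deriv F y :=
    Filter.eventuallyEq_of_mem (hs.mem_nhds hx) heqon
  rw [hev.deriv_eq]
  have hA : HasDerivAt (fun y => 2 * Real.sinh (F y) / Real.cosh (F y))
      ((2 * (Real.cosh (F x) * deriv F x) * Real.cosh (F x)
        - 2 * Real.sinh (F x) * (Real.sinh (F x) * deriv F x)) / Real.cosh (F x) ^ 2) x :=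
    (((hdF x hx).sinh).const_mul 2).div ((hdF x hx).cosh) (hcosh _)
  have htot : HasDerivAt (fun y => 2 * Real.sinh (F y) / Real.cosh (F y) * deriv F y) _ x := hA.mul hdF'x
  rw [htot.deriv]
  have key : Real.cosh (F x) ^ 2 - Real.sinh (F x) ^ 2 = 1 := Real.cosh_sq_sub_sinh_sq _
  have hnum : 2 * (Real.cosh (F x) * deriv F x) * Real.cosh (F x)
      - 2 * Real.sinh (F x) * (Real.sinh (F x) * deriv F x) = 2 * deriv F x := by
    linear_combination 2 * deriv F x * key
  rw [hnum]
  ring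

theorem subharmonicity_of_log_cosh_sq
    (Ω : Set ℂ) (hΩ : IsOpen Ω) (ξ K φ : ℂ → ℝ)
    (hξ : ContDiffOn ℝ (⊤ : ℕ∞) ξ Ω)
    (hK : ∀ z ∈ Ω, K z ≤ 0)
    (hφ : ∀ z ∈ Ω, 0 ≤ φ z)
    (heq : ∀ z ∈ Ω, lap ξ z = -2 * K z * Real.sinh (2 * ξ z) * φ z) :
    ∀ z ∈ Ω,
      lap (fun w => Real.log (Real.cosh (ξ w) ^ 2)) z
        = 2 * gradSq ξ z / Real.cosh (ξ z) ^ 2 - 8 * K z * Real.sinh (ξ z) ^ 2 * φ z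
      ∧ 0 ≤ lap (fun w => Real.log (Real.cosh (ξ w) ^ 2)) z := by
  intro z hz
  -- horizontal line
  have hline1 : ContDiff ℝ (⊤ : ℕ∞) (fun x : ℝ => (⟨x, z.im⟩ : ℂ)) := by
    have : (fun x : ℝ => (⟨x, z.im⟩ : ℂ)) = fun x : ℝ => (x : ℂ) + z.im * Complex.I := by
      funext x; rw [Complex.mk_eq_add_mul_I]
    rw [this]
    exact (Complex.ofRealCLM.contDiff).add contDiff_const
  have hline2 : ContDiff ℝ (⊤ : ℕ∞) (fun y : ℝ => (⟨z.re, y⟩ : ℂ)) := by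
    have : (fun y : ℝ => (⟨z.re, y⟩ : ℂ)) = fun y : ℝ => (z.re : ℂ) + y * Complex.I := by
      funext y; rw [Complex.mk_eq_add_mul_I]
    rw [this]
    exact contDiff_const.add ((Complex.ofRealCLM.contDiff).mul contDiff_const)
  set s1 : Set ℝ := (fun x : ℝ => (⟨x, z.im⟩ : ℂ)) ⁻¹' Ω with hs1def
  set s2 : Set ℝ := (fun y : ℝ => (⟨z.re, y⟩ : ℂ)) ⁻¹' Ω with hs2def
  have hs1 : IsOpen s1 := hΩ.preimage hline1.continuous
  have hs2 : IsOpen s2 := hΩ.preimage hline2.continuous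
  have hF1 : ContDiffOn ℝ (⊤ : ℕ∞) (fun x : ℝ => ξ ⟨x, z.im⟩) s1 :=
    hξ.comp hline1.contDiffOn (Set.mapsTo_preimage _ _)
  have hF2 : ContDiffOn ℝ (⊤ : ℕ∞) (fun y : ℝ => ξ ⟨z.re, y⟩) s2 :=
    hξ.comp hline2.contDiffOn (Set.mapsTo_preimage _ _)
  have hx1 : z.re ∈ s1 := by simpa [hs1def] using hz
  have hx2 : z.im ∈ s2 := by simpa [hs2def] using hz
  have c1 := slice_calc _ s1 hs1 hF1 z.re hx1
  have c2 := slice_calc _ s2 hs2 hF2 z.im hx2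
  have hmk : (⟨z.re, z.im⟩ : ℂ) = z := by exact Complex.ext rfl rfl
  have hcosh : Real.cosh (ξ z) ≠ 0 := (Real.cosh_pos _).ne'
  have hlap : lap (fun w => Real.log (Real.cosh (ξ w) ^ 2)) z
      = 2 * gradSq ξ z / Real.cosh (ξ z) ^ 2
        + 2 * Real.sinh (ξ z) / Real.cosh (ξ z) * lap ξ z := by
    simp only [lap, gradSq]
    rw [c1, c2, hmk]
    ring
  have hsinh2 : Real.sinh (2 * ξ z) = 2 * Real.sinh (ξ z) * Real.cosh (ξ z) :=
    Real.sinh_two_mul _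
  have hmain : lap (fun w => Real.log (Real.cosh (ξ w) ^ 2)) z
      = 2 * gradSq ξ z / Real.cosh (ξ z) ^ 2 - 8 * K z * Real.sinh (ξ z) ^ 2 * φ z := by
    rw [hlap, heq z hz, hsinh2]
    field_simp
    ring
  refine ⟨hmain, ?_⟩
  rw [hmain]
  have h1 : 0 ≤ gradSq ξ z := by simp only [gradSq]; positivity
  have h2 : 0 ≤ -K z * φ z := mul_nonneg (neg_nonneg.2 (hK z hz)) (hφ z hz)
  have h3 : 0 ≤ Real.sinh (ξ z) ^ 2 := sq_nonneg _
  have h4 : 0 < Real.cosh (ξ z) ^ 2 := by positivity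
  have : 0 ≤ -8 * K z * Real.sinh (ξ z) ^ 2 * φ z := by nlinarith
  have h5 : 0 ≤ 2 * gradSq ξ z / Real.cosh (ξ z) ^ 2 := by positivity
  linarith
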